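/- arXiv:1505.07495 — 3 statements merged into one kernel-verified Lean document; each statement's English description precedes it below -/
import Mathlib

section
/- With H defined as above from a convex-valued closed-graph correspondence G, H is linear on Δ(X): for all z, z' ∈ Δ(X) and λ ∈ [0,1], H(λ·z + (1−λ)·z') = λ·H(z) + (1−λ)·H(z'), where λ·μ + (1−λ)·μ' denotes the convex combination of measures and λ·A + (1−λ)·B the Minkowski-type combination of sets of measures. -/
/-!
A measurable selector `σ` for `w` sends `w` to `w.bind σ`, and `bind` is additive and
positively homogeneous in the measure, so the same selector exhibits `w.bind σ` as
`t • z.bind σ + (1 - t) • z'.bind σ`. Conversely, given selectors `σ₁` for `z` and `σ₂` for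
`z'`, let `g ∈ [0, 1]` be the density of `t • z` with respect to `w`. The pointwise mixture
`g x • σ₁ x + (1 - g x) • σ₂ x` lies in `G x` by convexity, is measurable because mixing is
weak-* continuous and `Δ(X)` is second countable, and sends `w` to `t • a + (1 - t) • b`.
Throughout, the defining condition of `H` is read as an equality of measures, since finite
Borel measures are determined by their integrals of continuous functions.
-/

open MeasureTheory Filter Topology

variable {X : Type*} [MetricSpace X] [CompactSpace X] [MeasurableSpace X] [BorelSpace X]
  [MeasurableSpace (ProbabilityMeasure X)] [BorelSpace (ProbabilityMeasure X)]

/-- The convex combination `t·μ + (1−t)·ν` of two probability measures, as a measure. -/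
noncomputable def pcomb (t : ℝ) (μ ν : ProbabilityMeasure X) : Measure X :=
  ENNReal.ofReal t • (μ : Measure X) + ENNReal.ofReal (1 - t) • (ν : Measure X)

/-- The one-step correspondence `H` on `Δ(X)` induced by a correspondence `G : X ⇉ Δ(X)`. -/
def Hcorr (G : X → Set (ProbabilityMeasure X)) (z : ProbabilityMeasure X) :
    Set (ProbabilityMeasure X) :=
  {μ : ProbabilityMeasure X | ∃ σ : X → ProbabilityMeasure X,
    Measurable σ ∧ (∀ x, σ x ∈ G x) ∧
    ∀ f : C(X, ℝ),
      (∫ x, f x ∂(μ : Measure X))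
        = ∫ x, (∫ y, f y ∂(σ x : Measure X)) ∂(z : Measure X)}

section

open ProbabilityTheory unitInterval

variable {Ω α : Type*} [MeasurableSpace Ω] [MeasurableSpace α]

namespace MeasureTheory.Measure

lemma integral_bind {E : Type*} [NormedAddCommGroup E] [NormedSpace ℝ E]
    {μ : Measure α} {κ : α → Measure Ω} (hκ : Measurable κ) {f : Ω → E}
    (hf : Integrable f (μ.bind κ)) :
    ∫ y, f y ∂(μ.bind κ) = ∫ x, ∫ y, f y ∂(κ x) ∂μ := by
  let k : Kernel α Ω := ⟨κ, hκ⟩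
  have hk : μ.bind κ = (k ∘ₖ Kernel.const Unit μ) () := comp_eq_comp_const_apply (κ := k)
  rw [hk] at hf ⊢
  rw [Kernel.integral_comp hf, Kernel.const_apply]
  rfl

lemma add_bind (μ ν : Measure α) {κ : α → Measure Ω} (hκ : Measurable κ) :
    (μ + ν).bind κ = μ.bind κ + ν.bind κ :=
  comp_add (κ := ⟨κ, hκ⟩)

lemma exists_unitInterval_density_of_add (ν₁ ν₂ : Measure α) [IsFiniteMeasure ν₁]
    [IsFiniteMeasure ν₂] :
    ∃ g : α → I, Measurable g ∧
      (ν₁ + ν₂).withDensity (fun x => ENNReal.ofReal (g x)) = ν₁ ∧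
      (ν₁ + ν₂).withDensity (fun x => ENNReal.ofReal (1 - g x)) = ν₂ := by
  set w := ν₁ + ν₂
  have hle : ν₁ ≤ w := Measure.le_add_right le_rfl
  let g : α → I := fun x => Set.projIcc 0 1 zero_le_one (ν₁.rnDeriv w x).toReal
  have hg : Measurable g :=
    continuous_projIcc.measurable.comp (measurable_rnDeriv ν₁ w).ennreal_toReal
  have h₁ : w.withDensity (fun x => ENNReal.ofReal (g x)) = ν₁ := by
    rw [← withDensity_rnDeriv_eq ν₁ w (absolutelyContinuous_of_le hle)]
    refine withDensity_congr_ae ?_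
    filter_upwards [rnDeriv_le_one_of_le hle] with x hx
    have hx' : (ν₁.rnDeriv w x).toReal ∈ Set.Icc (0 : ℝ) 1 :=
      ⟨ENNReal.toReal_nonneg, ENNReal.toReal_le_of_le_ofReal zero_le_one (by simpa using hx)⟩
    simp only [g, Set.projIcc_of_mem _ hx']
    exact ENNReal.ofReal_toReal (ne_top_of_le_ne_top ENNReal.one_ne_top hx)
  have hsum : w.withDensity (fun x => ENNReal.ofReal (g x))
      + w.withDensity (fun x => ENNReal.ofReal (1 - g x)) = w := by
    rw [← withDensity_add_left (show Measurable fun x => ENNReal.ofReal (g x) by fun_prop)]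
    convert withDensity_one (μ := w)
    ext x
    rw [Pi.add_apply, ← ENNReal.ofReal_add (g x).2.1 (sub_nonneg.2 (g x).2.2)]
    simp
  refine ⟨g, hg, h₁, ?_⟩
  ext s hs
  have := congrArg (· s) hsum
  simp only [add_apply, h₁] at this
  exact (ENNReal.add_right_inj (measure_ne_top ν₁ s)).1 (this.trans (by simp [w]))

end MeasureTheory.Measure

namespace MeasureTheory.ProbabilityMeasure

lemma lowerSemicontinuous_toMeasure_apply [TopologicalSpace Ω] [OpensMeasurableSpace Ω]
    [HasOuterApproxClosed Ω] {U : Set Ω} (hU : IsOpen U) :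
    LowerSemicontinuous fun μ : ProbabilityMeasure Ω => (μ : Measure Ω) U := fun _ =>
  lowerSemicontinuousAt_iff_le_liminf.2 (le_liminf_measure_open_of_tendsto tendsto_id hU)

lemma measurable_toMeasure [TopologicalSpace Ω] [BorelSpace Ω] [HasOuterApproxClosed Ω]
    [MeasurableSpace (ProbabilityMeasure Ω)] [OpensMeasurableSpace (ProbabilityMeasure Ω)] :
    Measurable (toMeasure : ProbabilityMeasure Ω → Measure Ω) :=
  .measure_of_isPiSystem_of_isProbabilityMeasure (BorelSpace.measurable_eq (α := Ω))
    isPiSystem_isOpen fun _ hU => (lowerSemicontinuous_toMeasure_apply hU).measurable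

lemma isProbabilityMeasure_bind (z : Measure α) [IsProbabilityMeasure z]
    {κ : α → ProbabilityMeasure Ω} (hκ : Measurable fun x => (κ x : Measure Ω)) :
    IsProbabilityMeasure (z.bind fun x => (κ x : Measure Ω)) :=
  MeasureTheory.isProbabilityMeasure_bind hκ.aemeasurable (ae_of_all _ fun _ => inferInstance)

noncomputable def convexComb (t : I) (μ ν : ProbabilityMeasure Ω) : ProbabilityMeasure Ω :=
  ⟨ENNReal.ofReal t • (μ : Measure Ω) + ENNReal.ofReal (1 - t) • (ν : Measure Ω), by
    constructor
    simp [← ENNReal.ofReal_add t.2.1 (sub_nonneg.2 t.2.2)]⟩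

lemma integral_convexComb (t : I) (μ ν : ProbabilityMeasure Ω) {f : Ω → ℝ}
    (hfμ : Integrable f μ) (hfν : Integrable f ν) :
    ∫ x, f x ∂(convexComb t μ ν : Measure Ω)
      = t * ∫ x, f x ∂(μ : Measure Ω) + (1 - t) * ∫ x, f x ∂(ν : Measure Ω) := by
  rw [convexComb, coe_mk, integral_add_measure (hfμ.smul_measure ENNReal.ofReal_ne_top)
    (hfν.smul_measure ENNReal.ofReal_ne_top), integral_smul_measure, integral_smul_measure,
    ENNReal.toReal_ofReal t.2.1, ENNReal.toReal_ofReal (sub_nonneg.2 t.2.2), smul_eq_mul,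
    smul_eq_mul]

lemma continuous_convexComb [TopologicalSpace Ω] [OpensMeasurableSpace Ω] :
    Continuous fun p : I × ProbabilityMeasure Ω × ProbabilityMeasure Ω =>
      convexComb p.1 p.2.1 p.2.2 := by
  refine continuous_iff_forall_continuous_integral.2 fun f => ?_
  simp_rw [integral_convexComb _ _ _ (f.integrable _) (f.integrable _)]
  have hint := continuous_integral_boundedContinuousFunction f
  have h₁ : Continuous fun p : I × ProbabilityMeasure Ω × ProbabilityMeasure Ω =>
    ∫ x, f x ∂(p.2.1 : Measure Ω) := hint.comp (by fun_prop)
  have h₂ : Continuous fun p : I × ProbabilityMeasure Ω × ProbabilityMeasure Ω =>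
    ∫ x, f x ∂(p.2.2 : Measure Ω) := hint.comp (by fun_prop)
  fun_prop

variable {σ₁ σ₂ : α → ProbabilityMeasure Ω} {g : α → I}

lemma measurable_convexComb (h₁ : Measurable fun x => (σ₁ x : Measure Ω))
    (h₂ : Measurable fun x => (σ₂ x : Measure Ω)) (hg : Measurable g) :
    Measurable fun x => (convexComb (g x) (σ₁ x) (σ₂ x) : Measure Ω) :=
  Measure.measurable_of_measurable_coe _ fun s hs => by
    simp only [convexComb, coe_mk, Measure.add_apply, Measure.smul_apply, smul_eq_mul]
    have := (Measure.measurable_coe hs).comp h₁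
    have := (Measure.measurable_coe hs).comp h₂
    fun_prop

lemma bind_convexComb (w : Measure α) (h₁ : Measurable fun x => (σ₁ x : Measure Ω))
    (h₂ : Measurable fun x => (σ₂ x : Measure Ω)) (hg : Measurable g) :
    w.bind (fun x => (convexComb (g x) (σ₁ x) (σ₂ x) : Measure Ω))
      = (w.withDensity fun x => ENNReal.ofReal (g x)).bind (fun x => (σ₁ x : Measure Ω))
        + (w.withDensity fun x => ENNReal.ofReal (1 - g x)).bind
            (fun x => (σ₂ x : Measure Ω)) := by
  ext s hs
  have hs₁ : Measurable fun x => (σ₁ x : Measure Ω) s := (Measure.measurable_coe hs).comp h₁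
  have hs₂ : Measurable fun x => (σ₂ x : Measure Ω) s := (Measure.measurable_coe hs).comp h₂
  rw [Measure.add_apply, Measure.bind_apply hs (measurable_convexComb h₁ h₂ hg).aemeasurable,
    Measure.bind_apply hs h₁.aemeasurable, Measure.bind_apply hs h₂.aemeasurable,
    lintegral_withDensity_eq_lintegral_mul _ (by fun_prop) hs₁,
    lintegral_withDensity_eq_lintegral_mul _ (by fun_prop) hs₂,
    ← lintegral_add_left (by fun_prop)]
  simp [convexComb]

end MeasureTheory.ProbabilityMeasure

end

section

variable {G : X → Set (ProbabilityMeasure X)} {z z' w μ : ProbabilityMeasure X} {t : ℝ}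

lemma mem_Hcorr_iff :
    μ ∈ Hcorr G z ↔ ∃ σ : X → ProbabilityMeasure X, Measurable σ ∧ (∀ x, σ x ∈ G x) ∧
      (μ : Measure X) = (z : Measure X).bind fun x => σ x := by
  refine exists_congr fun σ => and_congr_right fun hσ => and_congr_right fun _ => ?_
  have hσ' : Measurable fun x => (σ x : Measure X) :=
    ProbabilityMeasure.measurable_toMeasure.comp hσ
  have := ProbabilityMeasure.isProbabilityMeasure_bind (z : Measure X) hσ'
  constructor
  · intro h
    refine ext_of_forall_integral_eq_of_IsFiniteMeasure fun f => ?_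
    exact (h f.toContinuousMap).trans (Measure.integral_bind hσ' (f.integrable _)).symm
  · intro h f
    rw [h]
    exact Measure.integral_bind hσ' ((BoundedContinuousFunction.mkOfCompact f).integrable _)

lemma exists_pcomb_of_mem_Hcorr (hw : (w : Measure X) = pcomb t z z') (hμ : μ ∈ Hcorr G w) :
    ∃ a ∈ Hcorr G z, ∃ b ∈ Hcorr G z', (μ : Measure X) = pcomb t a b := by
  obtain ⟨σ, hσ, hσG, hμ⟩ := mem_Hcorr_iff.1 hμ
  have hσ' : Measurable fun x => (σ x : Measure X) :=
    ProbabilityMeasure.measurable_toMeasure.comp hσ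
  have hprob (ν : ProbabilityMeasure X) :=
    ProbabilityMeasure.isProbabilityMeasure_bind (ν : Measure X) hσ'
  refine ⟨⟨_, hprob z⟩, mem_Hcorr_iff.2 ⟨σ, hσ, hσG, rfl⟩,
    ⟨_, hprob z'⟩, mem_Hcorr_iff.2 ⟨σ, hσ, hσG, rfl⟩, ?_⟩
  rw [hμ, hw, pcomb, Measure.add_bind _ _ hσ', Measure.bind_smul, Measure.bind_smul]
  rfl

lemma mem_Hcorr_of_eq_pcomb
    (hconv : ∀ x, ∀ μ ∈ G x, ∀ ν ∈ G x, ∀ t ∈ Set.Icc (0 : ℝ) 1,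
      ∃ ρ ∈ G x, (ρ : Measure X) = pcomb t μ ν)
    (hw : (w : Measure X) = pcomb t z z') {a b : ProbabilityMeasure X}
    (ha : a ∈ Hcorr G z) (hb : b ∈ Hcorr G z') (hμ : (μ : Measure X) = pcomb t a b) :
    μ ∈ Hcorr G w := by
  obtain ⟨σ₁, hσ₁, hG₁, ha⟩ := mem_Hcorr_iff.1 ha
  obtain ⟨σ₂, hσ₂, hG₂, hb⟩ := mem_Hcorr_iff.1 hb
  have := Measure.smul_finite (z : Measure X) (ENNReal.ofReal_ne_top (r := t))
  have := Measure.smul_finite (z' : Measure X) (ENNReal.ofReal_ne_top (r := 1 - t))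
  obtain ⟨g, hg, hg₁, hg₂⟩ := Measure.exists_unitInterval_density_of_add
    (ENNReal.ofReal t • (z : Measure X)) (ENNReal.ofReal (1 - t) • (z' : Measure X))
  rw [← pcomb, ← hw] at hg₁ hg₂
  refine mem_Hcorr_iff.2 ⟨fun x => ProbabilityMeasure.convexComb (g x) (σ₁ x) (σ₂ x),
    ProbabilityMeasure.continuous_convexComb.measurable.comp (hg.prodMk (hσ₁.prodMk hσ₂)),
    fun x => ?_, ?_⟩
  · obtain ⟨ρ, hρ, hρeq⟩ := hconv x _ (hG₁ x) _ (hG₂ x) (g x) (g x).2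
    have : ρ = ProbabilityMeasure.convexComb (g x) (σ₁ x) (σ₂ x) :=
      ProbabilityMeasure.toMeasure_injective hρeq
    rwa [this] at hρ
  · rw [ProbabilityMeasure.bind_convexComb _ (ProbabilityMeasure.measurable_toMeasure.comp hσ₁)
      (ProbabilityMeasure.measurable_toMeasure.comp hσ₂) hg, hg₁, hg₂, hμ, pcomb, ha, hb,
      Measure.bind_smul, Measure.bind_smul]

end

theorem Hcorr_linear_general
    (G : X → Set (ProbabilityMeasure X))
    (hconv : ∀ x, ∀ μ ∈ G x, ∀ ν ∈ G x, ∀ t ∈ Set.Icc (0 : ℝ) 1,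
      ∃ ρ ∈ G x, (ρ : Measure X) = pcomb t μ ν) :
    ∀ z z' : ProbabilityMeasure X, ∀ t ∈ Set.Icc (0 : ℝ) 1,
      ∀ w : ProbabilityMeasure X, (w : Measure X) = pcomb t z z' →
        Hcorr G w
          = {μ : ProbabilityMeasure X |
              ∃ a ∈ Hcorr G z, ∃ b ∈ Hcorr G z', (μ : Measure X) = pcomb t a b} := by
  intro z z' t _ w hw
  ext μ
  exact ⟨exists_pcomb_of_mem_Hcorr hw,
    fun ⟨_, ha, _, hb, hμ⟩ => mem_Hcorr_of_eq_pcomb hconv hw ha hb hμ⟩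

/-- the correspondence `H` induced by a convex-valued closed-graph
correspondence `G` is linear on `Δ(X)`:
`H(λ·z + (1−λ)·z') = λ·H(z) + (1−λ)·H(z')`. -/
theorem Hcorr_linear
    (G : X → Set (ProbabilityMeasure X))
    (hclosed : IsClosed {p : X × ProbabilityMeasure X | p.2 ∈ G p.1})
    (hne : ∀ x, (G x).Nonempty)
    (hconv : ∀ x, ∀ μ ∈ G x, ∀ ν ∈ G x, ∀ t ∈ Set.Icc (0 : ℝ) 1,
      ∃ ρ ∈ G x, (ρ : Measure X) = pcomb t μ ν) :
    ∀ z z' : ProbabilityMeasure X, ∀ t ∈ Set.Icc (0 : ℝ) 1,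
      ∀ w : ProbabilityMeasure X, (w : Measure X) = pcomb t z z' →
        Hcorr G w
          = {μ : ProbabilityMeasure X |
              ∃ a ∈ Hcorr G z, ∃ b ∈ Hcorr G z', (μ : Measure X) = pcomb t a b} :=
  Hcorr_linear_general G hconv
end

section
/- Suppose the family of n-stage value functions {v_n : n ≥ 1} and the long-run value w∞ all admit a common modulus of continuity η. Let x, y ∈ X and suppose there exists a strategy σ* with (1/n)∑_{m=1}^n r_m → v(x) P^x_{σ*}-a.s., where v = limsup_n v_n. Then w∞(x) = v(x), and for every ε > 0 there exists a strategy σ with E^y_σ[liminf_n (1/n)∑ r_m] ≥ v(y) − 2η(d(x,y)) − ε. -/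
/-!
The Cesàro averages take values in `[0, 1]`, so Fatou's lemma bounds the expected liminf of any
strategy by the liminf of its `n`-stage payoffs, hence by `v`: thus `w∞ ≤ v` everywhere. At `x`
the strategy `σ*` attains `v x`, so `w∞(x) = v(x)`. Passing the modulus of `v_n` to the limsup
gives `v(y) ≤ v(x) + η(d(x,y))`, and the modulus of `w∞` gives `w∞(y) ≥ w∞(x) − η(d(x,y))`;
an `ε`-optimal strategy for `w∞(y)` finishes the proof.
-/

open MeasureTheory Filter Topology

lemma ciSup_mem_Icc {ι α : Type*} [Nonempty ι] [ConditionallyCompleteLattice α] {f : ι → α}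
    {a b : α} (h : ∀ i, f i ∈ Set.Icc a b) : ⨆ i, f i ∈ Set.Icc a b :=
  ⟨le_ciSup_of_le ⟨b, by rintro _ ⟨i, rfl⟩; exact (h i).2⟩ (Classical.arbitrary ι)
    (h _).1, ciSup_le fun i => (h i).2⟩

lemma liminf_mem_Icc {u : ℕ → ℝ} {a b : ℝ} (h : ∀ n, u n ∈ Set.Icc a b) :
    liminf u atTop ∈ Set.Icc a b := by
  have hbdd : IsBoundedUnder (· ≥ ·) atTop u := isBoundedUnder_of ⟨a, fun n => (h n).1⟩
  have hcobdd : IsCoboundedUnder (· ≥ ·) atTop u :=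
    isCoboundedUnder_ge_of_le atTop fun n => (h n).2
  exact ⟨le_liminf_of_le hcobdd (.of_forall fun n => (h n).1),
    (liminf_le_limsup (isBoundedUnder_of ⟨b, fun n => (h n).2⟩) hbdd).trans
      (limsup_le_of_le (isBoundedUnder_of ⟨a, fun n => (h n).1⟩).isCoboundedUnder_le
        (.of_forall fun n => (h n).2))⟩

lemma ENNReal.ofReal_liminf {u : ℕ → ℝ} {C : ℝ} (h : ∀ n, u n ∈ Set.Icc 0 C) :
    ENNReal.ofReal (liminf u atTop) = liminf (fun n => ENNReal.ofReal (u n)) atTop :=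
  ENNReal.ofReal_mono.map_liminf_of_continuousAt u ENNReal.continuous_ofReal.continuousAt
    (isCoboundedUnder_ge_of_le atTop fun n => (h n).2) (isBoundedUnder_of ⟨0, fun n => (h n).1⟩)

lemma limsup_le_limsup_add_of_eventually_le {u w : ℕ → ℝ} {c : ℝ}
    (h : ∀ᶠ n in atTop, u n ≤ w n + c) (hu : IsBoundedUnder (· ≥ ·) atTop u)
    (hw : IsBoundedUnder (· ≤ ·) atTop w) (hw' : IsBoundedUnder (· ≥ ·) atTop w) :
    limsup u atTop ≤ limsup w atTop + c := by
  rw [← limsup_add_const atTop w c hw hw'.isCoboundedUnder_le]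
  exact limsup_le_limsup h hu.isCoboundedUnder_le
    (isBoundedUnder_le_add hw (isBoundedUnder_const (a := c)))

section Integral
variable {Ω : Type*} [MeasurableSpace Ω]

lemma integral_mem_Icc_of_forall_mem_Icc {μ : Measure Ω} [IsProbabilityMeasure μ]
    {f : Ω → ℝ} {C : ℝ} (h : ∀ ω, f ω ∈ Set.Icc 0 C) : ∫ ω, f ω ∂μ ∈ Set.Icc 0 C :=
  ⟨integral_nonneg (h · |>.1), (integral_mono_of_nonneg (.of_forall (h · |>.1))
    (integrable_const C) (.of_forall (h · |>.2))).trans_eq (by simp)⟩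

theorem integral_liminf_le_liminf_integral {μ : Measure Ω} [IsFiniteMeasure μ]
    {g : ℕ → Ω → ℝ} {C : ℝ} (hg : ∀ n, Measurable (g n)) (hgC : ∀ n ω, g n ω ∈ Set.Icc 0 C) :
    ∫ ω, liminf (g · ω) atTop ∂μ ≤ liminf (fun n => ∫ ω, g n ω ∂μ) atTop := by
  have hint : ∀ n, Integrable (g n) μ := fun n =>
    .of_bound (hg n).aestronglyMeasurable C (.of_forall fun ω => by
      rw [Real.norm_of_nonneg (hgC n ω).1]; exact (hgC n ω).2)
  have hlim : ∀ ω, liminf (g · ω) atTop ∈ Set.Icc 0 C := fun ω => liminf_mem_Icc (hgC · ω)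
  have hlim_int : Integrable (fun ω => liminf (g · ω) atTop) μ :=
    .of_bound (Measurable.liminf hg).aestronglyMeasurable C (.of_forall fun ω => by
      rw [Real.norm_of_nonneg (hlim ω).1]; exact (hlim ω).2)
  have hI : ∀ n, ∫ ω, g n ω ∂μ ∈ Set.Icc 0 (μ.real Set.univ * C) := fun n =>
    ⟨integral_nonneg fun ω => (hgC n ω).1, (integral_mono (hint n) (integrable_const C)
      fun ω => (hgC n ω).2).trans_eq (by simp)⟩
  rw [← ENNReal.ofReal_le_ofReal_iff (liminf_mem_Icc hI).1,
    ofReal_integral_eq_lintegral_ofReal hlim_int (.of_forall fun ω => (hlim ω).1),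
    ENNReal.ofReal_liminf hI]
  calc ∫⁻ ω, ENNReal.ofReal (liminf (g · ω) atTop) ∂μ
      = ∫⁻ ω, liminf (fun n => ENNReal.ofReal (g n ω)) atTop ∂μ := by
        simp only [ENNReal.ofReal_liminf (hgC · _)]
    _ ≤ liminf (fun n => ∫⁻ ω, ENNReal.ofReal (g n ω) ∂μ) atTop :=
        lintegral_liminf_le fun n => (hg n).ennreal_ofReal
    _ = liminf (fun n => ENNReal.ofReal (∫ ω, g n ω ∂μ)) atTop := by
        simp only [ofReal_integral_eq_lintegral_ofReal (hint _) (.of_forall fun ω => (hgC _ ω).1)]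

variable {S : Type*}

theorem iSup_integral_liminf_le_limsup_iSup_integral [Nonempty S] {μ : S → Measure Ω}
    [∀ σ, IsProbabilityMeasure (μ σ)] {g : ℕ → Ω → ℝ} {C : ℝ} (hg : ∀ n, Measurable (g n))
    (hgC : ∀ n ω, g n ω ∈ Set.Icc 0 C) :
    ⨆ σ, ∫ ω, liminf (g · ω) atTop ∂μ σ ≤ limsup (fun n => ⨆ σ, ∫ ω, g n ω ∂μ σ) atTop := by
  have hI : ∀ n σ, ∫ ω, g n ω ∂μ σ ∈ Set.Icc 0 C := fun n σ =>
    integral_mem_Icc_of_forall_mem_Icc (hgC n)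
  have hbdd : ∀ n, BddAbove (Set.range fun σ => ∫ ω, g n ω ∂μ σ) := fun n =>
    ⟨C, by rintro _ ⟨σ, rfl⟩; exact (hI n σ).2⟩
  refine ciSup_le fun σ => (integral_liminf_le_liminf_integral hg hgC).trans ?_
  refine (liminf_le_limsup (isBoundedUnder_of ⟨C, fun n => (hI n σ).2⟩)
    (isBoundedUnder_of ⟨0, fun n => (hI n σ).1⟩)).trans ?_
  exact limsup_le_limsup (.of_forall fun n => le_ciSup (hbdd n) σ)
    (isCoboundedUnder_le_of_le atTop fun n => (hI n σ).1)
    (isBoundedUnder_of ⟨C, fun n => ciSup_le fun σ => (hI n σ).2⟩)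

lemma integral_liminf_eq_of_ae_tendsto {μ : Measure Ω} [IsProbabilityMeasure μ]
    {g : ℕ → Ω → ℝ} {c : ℝ} (h : ∀ᵐ ω ∂μ, Tendsto (g · ω) atTop (𝓝 c)) :
    ∫ ω, liminf (g · ω) atTop ∂μ = c := by
  rw [integral_congr_ae (h.mono fun ω hω => hω.liminf_eq)]
  simp

end Integral

section Cesaro
variable {X : Type*}

noncomputable def cesaroMean (r : X → ℝ) (n : ℕ) (ω : ℕ → X) : ℝ :=
  (1 / (n : ℝ)) * ∑ m ∈ Finset.Icc 1 n, r (ω m)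

lemma cesaroMean_mem_Icc {r : X → ℝ} {C : ℝ} (hr : ∀ x, r x ∈ Set.Icc 0 C) (n : ℕ)
    (ω : ℕ → X) : cesaroMean r n ω ∈ Set.Icc 0 C := by
  rcases Nat.eq_zero_or_pos n with rfl | hn
  · simpa [cesaroMean] using (hr (ω 0)).1.trans (hr (ω 0)).2
  have hsum : ∑ m ∈ Finset.Icc 1 n, r (ω m) ≤ n * C := by
    simpa using Finset.sum_le_sum fun m (_ : m ∈ Finset.Icc 1 n) => (hr (ω m)).2
  refine ⟨mul_nonneg (by positivity) (Finset.sum_nonneg fun m _ => (hr (ω m)).1), ?_⟩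
  rw [cesaroMean, one_div, inv_mul_le_iff₀ (by exact_mod_cast hn)]
  exact hsum

lemma measurable_cesaroMean [MeasurableSpace X] {r : X → ℝ} (hr : Measurable r) (n : ℕ) :
    Measurable (cesaroMean r n) :=
  (Finset.measurable_sum _ fun m _ => hr.comp (measurable_pi_apply m)).const_mul _

end Cesaro

theorem junction_lemma_general
    {X : Type*} [MetricSpace X] [MeasurableSpace X]
    {S : Type*} (P : S → X → Measure (ℕ → X))
    (hP : ∀ σ x, IsProbabilityMeasure (P σ x))
    (r : X → ℝ) (hr : Measurable r) (hr01 : ∀ x, r x ∈ Set.Icc (0 : ℝ) 1)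
    (vN : ℕ → X → ℝ) (winf : X → ℝ) (v : X → ℝ)
    (hvN : ∀ n x, vN n x
      = ⨆ σ : S, ∫ ω, (1 / (n : ℝ)) * ∑ m ∈ Finset.Icc 1 n, r (ω m) ∂(P σ x))
    (hwinf : ∀ x, winf x
      = ⨆ σ : S, ∫ ω,
          liminf (fun n : ℕ => (1 / (n : ℝ)) * ∑ m ∈ Finset.Icc 1 n, r (ω m)) atTop
            ∂(P σ x))
    (hv : ∀ x, v x = limsup (fun n : ℕ => vN n x) atTop)
    (η : ℝ → ℝ)
    (hmodv : ∀ n : ℕ, 1 ≤ n → ∀ x y : X, |vN n x - vN n y| ≤ η (dist x y))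
    (hmodw : ∀ x y : X, |winf x - winf y| ≤ η (dist x y))
    (x y : X) (σstar : S)
    (hσstar : ∀ᵐ ω ∂(P σstar x),
      Tendsto (fun n : ℕ => (1 / (n : ℝ)) * ∑ m ∈ Finset.Icc 1 n, r (ω m)) atTop
        (nhds (v x))) :
    winf x = v x ∧
    ∀ ε > (0 : ℝ), ∃ σ : S,
      (∫ ω, liminf (fun n : ℕ => (1 / (n : ℝ)) * ∑ m ∈ Finset.Icc 1 n, r (ω m)) atTop
          ∂(P σ y))
        ≥ v y - 2 * η (dist x y) - ε := by
  have : Nonempty S := ⟨σstar⟩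
  have hmean := cesaroMean_mem_Icc hr01
  have hlim_mem : ∀ σ z, ∫ ω, liminf (cesaroMean r · ω) atTop ∂P σ z ∈ Set.Icc (0 : ℝ) 1 :=
    fun σ z => integral_mem_Icc_of_forall_mem_Icc fun ω => liminf_mem_Icc (hmean · ω)
  have hvN_mem : ∀ n z, vN n z ∈ Set.Icc (0 : ℝ) 1 := fun n z => by
    rw [hvN]
    exact ciSup_mem_Icc fun σ => integral_mem_Icc_of_forall_mem_Icc (hmean n)
  have hwinf_le : ∀ z, winf z ≤ v z := fun z => by
    rw [hwinf, hv]
    simp_rw [hvN]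
    exact iSup_integral_liminf_le_limsup_iSup_integral (measurable_cesaroMean hr) hmean
  have hwx : winf x = v x := by
    refine (hwinf_le x).antisymm ?_
    rw [hwinf, ← integral_liminf_eq_of_ae_tendsto hσstar]
    exact le_ciSup (f := fun σ => ∫ ω, liminf (cesaroMean r · ω) atTop ∂P σ x)
      ⟨1, by rintro _ ⟨σ, rfl⟩; exact (hlim_mem σ x).2⟩ σstar
  have hvy : v y ≤ v x + η (dist x y) := by
    rw [hv, hv]
    refine limsup_le_limsup_add_of_eventually_le ((eventually_ge_atTop 1).mono fun n hn => ?_)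
      (isBoundedUnder_of ⟨0, fun n => (hvN_mem n y).1⟩)
      (isBoundedUnder_of ⟨1, fun n => (hvN_mem n x).2⟩)
      (isBoundedUnder_of ⟨0, fun n => (hvN_mem n x).1⟩)
    linarith [(abs_le.1 (hmodv n hn x y)).1]
  refine ⟨hwx, fun ε hε => ?_⟩
  obtain ⟨σ, hσ⟩ := exists_lt_of_lt_ciSup ((sub_lt_self _ hε).trans_eq (hwinf y))
  refine ⟨σ, ?_⟩
  linarith [(abs_le.1 (hmodw x y)).2]

/-- junction lemma. In a gambling house with play space `ℕ → X`, payoff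
`r : X → [0,1]`, strategies `S` inducing play laws `P σ x`, suppose the `n`-stage values
`v_n` and the long-run value `w∞` admit a common (increasing) modulus of continuity `η`.
If from `x` some strategy `σ*` makes the Cesàro averages converge a.s. to
`v(x) = limsup_n v_n(x)`, then `w∞(x) = v(x)`, and for every `ε > 0` there is a strategy
`σ` with `E^y_σ[liminf (1/n)∑ r_m] ≥ v(y) − 2·η(d(x,y)) − ε`. -/
theorem junction_lemma
    {X : Type*} [MetricSpace X] [CompactSpace X] [MeasurableSpace X] [BorelSpace X]
    {S : Type*} (P : S → X → Measure (ℕ → X))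
    (hP : ∀ σ x, IsProbabilityMeasure (P σ x))
    (r : X → ℝ) (hr : Measurable r) (hr01 : ∀ x, r x ∈ Set.Icc (0 : ℝ) 1)
    (vN : ℕ → X → ℝ) (winf : X → ℝ) (v : X → ℝ)
    (hvN : ∀ n x, vN n x
      = ⨆ σ : S, ∫ ω, (1 / (n : ℝ)) * ∑ m ∈ Finset.Icc 1 n, r (ω m) ∂(P σ x))
    (hwinf : ∀ x, winf x
      = ⨆ σ : S, ∫ ω,
          liminf (fun n : ℕ => (1 / (n : ℝ)) * ∑ m ∈ Finset.Icc 1 n, r (ω m)) atTop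
            ∂(P σ x))
    (hv : ∀ x, v x = limsup (fun n : ℕ => vN n x) atTop)
    (η : ℝ → ℝ) (hη : Monotone η)
    (hmodv : ∀ n : ℕ, 1 ≤ n → ∀ x y : X, |vN n x - vN n y| ≤ η (dist x y))
    (hmodw : ∀ x y : X, |winf x - winf y| ≤ η (dist x y))
    (x y : X) (σstar : S)
    (hσstar : ∀ᵐ ω ∂(P σstar x),
      Tendsto (fun n : ℕ => (1 / (n : ℝ)) * ∑ m ∈ Finset.Icc 1 n, r (ω m)) atTop
        (nhds (v x))) :
    winf x = v x ∧
    ∀ ε > (0 : ℝ), ∃ σ : S,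
      (∫ ω, liminf (fun n : ℕ => (1 / (n : ℝ)) * ∑ m ∈ Finset.Icc 1 n, r (ω m)) atTop
          ∂(P σ y))
        ≥ v y - 2 * η (dist x y) - ε :=
  junction_lemma_general P hP r hr hr01 vN winf v hvN hwinf hv η hmodv hmodw x y σstar hσstar
end

section
/- Junction lemma for POMDPs: let p, p' ∈ Δ(K) and σ a strategy such that E^p_σ[lim_{n→∞}(1/n)∑_{m=1}^n g(k_m,i_m)] = v(p), where v = limsup_n v_n and each v_n is 1-Lipschitz for ‖·‖₁. Then E^{p'}_σ[liminf_{n→∞}(1/n)∑_{m=1}^n g(k_m,i_m)] ≥ v(p') − 2‖p − p'‖₁. -/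
/-!
Write `F` for the liminf of the Cesàro averages of the payoffs. Since the law of the play under
`σ` from a prior `q` is the mixture `∑ₖ q k • Q σ k`, the map `q ↦ E^q_σ[F]` is linear in `q`
with coefficients `E_{Q σ k}[F] ∈ [0, 1]`, hence 1-Lipschitz for `‖·‖₁`. On the other hand
`F = L` almost surely from `p`, so `E^p_σ[F] = v p`, and `v`, as a limsup of 1-Lipschitz
functions with values in `[0, 1]`, is itself 1-Lipschitz. Chaining the two estimates gives
`E^{p'}_σ[F] ≥ v p - ‖p - p'‖₁ ≥ v p' - 2‖p - p'‖₁`.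
-/

open MeasureTheory Filter Set

section Bounds

variable {ι : Type*} {a b : ℝ}

theorem one_div_mul_sum_Icc_mem_Icc {x : ℕ → ℝ} (hx : ∀ m, x m ∈ Icc (0 : ℝ) 1) (n : ℕ) :
    (1 / (n : ℝ)) * ∑ m ∈ Finset.Icc 1 n, x m ∈ Icc (0 : ℝ) 1 := by
  have hsum_le : ∑ m ∈ Finset.Icc 1 n, x m ≤ n := by
    simpa using Finset.sum_le_sum fun m (_ : m ∈ Finset.Icc 1 n) => (hx m).2
  rw [one_div_mul_eq_div]
  exact ⟨div_nonneg (Finset.sum_nonneg fun m _ => (hx m).1) n.cast_nonneg,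
    div_le_one_of_le₀ hsum_le n.cast_nonneg⟩

theorem ciSup_mem_Icc_s17 [Nonempty ι] {u : ι → ℝ} (hu : ∀ i, u i ∈ Icc a b) :
    ⨆ i, u i ∈ Icc a b :=
  ⟨(hu (Classical.arbitrary ι)).1.trans
      (le_ciSup ⟨b, forall_mem_range.2 fun i => (hu i).2⟩ _),
    ciSup_le fun i => (hu i).2⟩

theorem liminf_mem_Icc_s17 {F : Filter ι} [NeBot F] {u : ι → ℝ} (hu : ∀ i, u i ∈ Icc a b) :
    liminf u F ∈ Icc a b :=
  ⟨le_liminf_of_le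
      (isBoundedUnder_of_eventually_le (.of_forall fun i => (hu i).2)).isCoboundedUnder_ge
      (.of_forall fun i => (hu i).1),
    liminf_le_of_frequently_le (.of_forall fun i => (hu i).2)
      (isBoundedUnder_of_eventually_ge (.of_forall fun i => (hu i).1))⟩

theorem limsup_le_limsup_add_of_eventually_le_s17 {F : Filter ι} [NeBot F] {u w : ι → ℝ} {D : ℝ}
    (hu : ∀ i, a ≤ u i) (hw : ∀ i, w i ∈ Icc a b) (h : ∀ᶠ i in F, u i ≤ w i + D) :
    limsup u F ≤ limsup w F + D := by
  have hw_le : IsBoundedUnder (· ≤ ·) F w :=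
    isBoundedUnder_of_eventually_le (.of_forall fun i => (hw i).2)
  have hw_ge : IsBoundedUnder (· ≥ ·) F w :=
    isBoundedUnder_of_eventually_ge (.of_forall fun i => (hw i).1)
  calc limsup u F ≤ limsup (fun i => w i + D) F :=
        limsup_le_limsup h (isBoundedUnder_of_eventually_ge (.of_forall hu)).isCoboundedUnder_le
          (isBoundedUnder_of_eventually_le (.of_forall fun i => add_le_add_left (hw i).2 D))
    _ = limsup w F + D := limsup_add_const F w D hw_le hw_ge.isCoboundedUnder_le

theorem integral_mem_Icc_zero_one {Ω : Type*} [MeasurableSpace Ω] {μ : Measure Ω}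
    [IsProbabilityMeasure μ] {f : Ω → ℝ} (hf : ∀ ω, f ω ∈ Icc (0 : ℝ) 1) :
    ∫ ω, f ω ∂μ ∈ Icc (0 : ℝ) 1 := by
  refine ⟨integral_nonneg fun ω => (hf ω).1, (le_abs_self _).trans ?_⟩
  simpa using norm_integral_le_of_norm_le_const (μ := μ) (C := 1)
    (.of_forall fun ω => (Real.norm_of_nonneg (hf ω).1).trans_le (hf ω).2)

theorem sum_mul_sub_sum_mul_le_sum_abs_sub {K : Type*} [Fintype K] {q q' c : K → ℝ}
    (hc : ∀ k, c k ∈ Icc (0 : ℝ) 1) :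
    ∑ k, q k * c k - ∑ k, q' k * c k ≤ ∑ k, |q k - q' k| := by
  rw [← Finset.sum_sub_distrib]
  refine Finset.sum_le_sum fun k _ => ?_
  calc q k * c k - q' k * c k = (q k - q' k) * c k := by ring
    _ ≤ |q k - q' k| * c k := mul_le_mul_of_nonneg_right (le_abs_self _) (hc k).1
    _ ≤ |q k - q' k| := mul_le_of_le_one_right (abs_nonneg _) (hc k).2

end Bounds

section Mixture

variable {K Ω : Type*} [Fintype K] [MeasurableSpace Ω] {μ : K → Measure Ω} {q : K → ℝ}

theorem isProbabilityMeasure_sum_ofReal_smul [∀ k, IsProbabilityMeasure (μ k)]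
    (hq0 : ∀ k, 0 ≤ q k) (hq1 : ∑ k, q k = 1) :
    IsProbabilityMeasure (∑ k, ENNReal.ofReal (q k) • μ k) := by
  constructor
  simp only [Measure.coe_finsetSum, Finset.sum_apply, Measure.smul_apply, measure_univ,
    smul_eq_mul, mul_one]
  rw [← ENNReal.ofReal_sum_of_nonneg fun k _ => hq0 k, hq1, ENNReal.ofReal_one]

theorem integral_sum_ofReal_smul (hq : ∀ k, 0 ≤ q k) {f : Ω → ℝ}
    (hf : ∀ k, Integrable f (μ k)) :
    ∫ ω, f ω ∂(∑ k, ENNReal.ofReal (q k) • μ k) = ∑ k, q k * ∫ ω, f ω ∂μ k := by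
  rw [integral_finsetSum_measure fun k _ => (hf k).smul_measure ENNReal.ofReal_ne_top]
  refine Finset.sum_congr rfl fun k _ => ?_
  rw [integral_smul_measure, ENNReal.toReal_ofReal (hq k), smul_eq_mul]

end Mixture

theorem pomdp_junction_lemma_general
    {K : Type*} [Fintype K] {Ω : Type*} [MeasurableSpace Ω] {S : Type*}
    (Q : S → K → Measure Ω) (hQ : ∀ σ k, IsProbabilityMeasure (Q σ k))
    (g : ℕ → Ω → ℝ) (hg : ∀ m, Measurable (g m))
    (hg01 : ∀ m ω, g m ω ∈ Set.Icc (0 : ℝ) 1)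
    (vN : ℕ → (K → ℝ) → ℝ) (v : (K → ℝ) → ℝ)
    (hvN : ∀ (n : ℕ) (q : K → ℝ), vN n q
      = ⨆ σ : S, ∫ ω, (1 / (n : ℝ)) * ∑ m ∈ Finset.Icc 1 n, g m ω
          ∂(∑ k, ENNReal.ofReal (q k) • Q σ k))
    (hv : ∀ q : K → ℝ, v q = limsup (fun n : ℕ => vN n q) atTop)
    (hvNLip : ∀ (n : ℕ), 1 ≤ n → ∀ q q' : K → ℝ,
      ((∀ k, 0 ≤ q k) ∧ ∑ k, q k = 1) → ((∀ k, 0 ≤ q' k) ∧ ∑ k, q' k = 1) →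
      |vN n q - vN n q'| ≤ ∑ k, |q k - q' k|)
    (p p' : K → ℝ)
    (hp : (∀ k, 0 ≤ p k) ∧ ∑ k, p k = 1) (hp' : (∀ k, 0 ≤ p' k) ∧ ∑ k, p' k = 1)
    (σ : S) (L : Ω → ℝ)
    (hL : ∀ᵐ ω ∂(∑ k, ENNReal.ofReal (p k) • Q σ k),
      Tendsto (fun n : ℕ => (1 / (n : ℝ)) * ∑ m ∈ Finset.Icc 1 n, g m ω) atTop
        (nhds (L ω)))
    (hLv : (∫ ω, L ω ∂(∑ k, ENNReal.ofReal (p k) • Q σ k)) = v p) :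
    (∫ ω, liminf (fun n : ℕ => (1 / (n : ℝ)) * ∑ m ∈ Finset.Icc 1 n, g m ω) atTop
        ∂(∑ k, ENNReal.ofReal (p' k) • Q σ k))
      ≥ v p' - 2 * ∑ k, |p k - p' k| := by
  have hA (n : ℕ) (ω : Ω) : (1 / (n : ℝ)) * ∑ m ∈ Finset.Icc 1 n, g m ω ∈ Icc (0 : ℝ) 1 :=
    one_div_mul_sum_Icc_mem_Icc (hg01 · ω) n
  have hvN_mem (q : K → ℝ) (hq : (∀ k, 0 ≤ q k) ∧ ∑ k, q k = 1) (n : ℕ) :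
      vN n q ∈ Icc (0 : ℝ) 1 := by
    have : Nonempty S := ⟨σ⟩
    have := hQ
    rw [hvN]
    exact ciSup_mem_Icc_s17 fun τ =>
      have := isProbabilityMeasure_sum_ofReal_smul (μ := Q τ) hq.1 hq.2
      integral_mem_Icc_zero_one (hA n)
  have hv_le : v p' ≤ v p + ∑ k, |p k - p' k| := by
    rw [hv, hv]
    refine limsup_le_limsup_add_of_eventually_le_s17 (fun n => (hvN_mem p' hp' n).1)
      (hvN_mem p hp) ?_
    filter_upwards [eventually_ge_atTop 1] with n hn
    linarith [le_abs_self (vN n p' - vN n p), abs_sub_comm (vN n p') (vN n p),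
      hvNLip n hn p p' hp hp']
  have hF (ω : Ω) := liminf_mem_Icc_s17 (F := atTop) (hA · ω)
  have hF_int (k : K) : Integrable (fun ω =>
      liminf (fun n : ℕ => (1 / (n : ℝ)) * ∑ m ∈ Finset.Icc 1 n, g m ω) atTop) (Q σ k) :=
    have := hQ σ k
    .of_bound (Measurable.liminf fun n => measurable_const.mul
        (Finset.measurable_sum _ fun m _ => hg m)).aestronglyMeasurable 1
      (.of_forall fun ω => (Real.norm_of_nonneg (hF ω).1).trans_le (hF ω).2)
  have hF_p : ∫ ω, liminf (fun n : ℕ => (1 / (n : ℝ)) * ∑ m ∈ Finset.Icc 1 n, g m ω) atTop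
      ∂(∑ k, ENNReal.ofReal (p k) • Q σ k) = v p :=
    hLv ▸ integral_congr_ae (hL.mono fun ω hω => hω.liminf_eq)
  rw [integral_sum_ofReal_smul hp.1 hF_int] at hF_p
  rw [ge_iff_le, integral_sum_ofReal_smul hp'.1 hF_int]
  have := hQ σ
  linarith [sum_mul_sub_sum_mul_le_sum_abs_sub (q := p) (q' := p')
    fun k => integral_mem_Icc_zero_one (μ := Q σ k) hF]

/-- junction lemma for POMDPs. With the play law from prior `p` given by
the mixture `∑_k p(k)·Q σ k` of the prior-independent conditional laws `Q σ k`, suppose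
each `n`-stage value `v_n` is 1-Lipschitz for `‖·‖₁` and `v = limsup_n v_n`. If `σ` is a
strategy from `p` whose Cesàro average payoffs converge a.s. with
`E^p_σ[lim (1/n)∑ g_m] = v(p)`, then
`E^{p'}_σ[liminf (1/n)∑ g_m] ≥ v(p') − 2‖p − p'‖₁`. -/
theorem pomdp_junction_lemma
    {K : Type*} [Fintype K] {Ω : Type*} [MeasurableSpace Ω] {S : Type*} [Nonempty S]
    (Q : S → K → Measure Ω) (hQ : ∀ σ k, IsProbabilityMeasure (Q σ k))
    (g : ℕ → Ω → ℝ) (hg : ∀ m, Measurable (g m))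
    (hg01 : ∀ m ω, g m ω ∈ Set.Icc (0 : ℝ) 1)
    (vN : ℕ → (K → ℝ) → ℝ) (v : (K → ℝ) → ℝ)
    (hvN : ∀ (n : ℕ) (q : K → ℝ), vN n q
      = ⨆ σ : S, ∫ ω, (1 / (n : ℝ)) * ∑ m ∈ Finset.Icc 1 n, g m ω
          ∂(∑ k, ENNReal.ofReal (q k) • Q σ k))
    (hv : ∀ q : K → ℝ, v q = limsup (fun n : ℕ => vN n q) atTop)
    (hvNLip : ∀ (n : ℕ), 1 ≤ n → ∀ q q' : K → ℝ,
      ((∀ k, 0 ≤ q k) ∧ ∑ k, q k = 1) → ((∀ k, 0 ≤ q' k) ∧ ∑ k, q' k = 1) →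
      |vN n q - vN n q'| ≤ ∑ k, |q k - q' k|)
    (p p' : K → ℝ)
    (hp : (∀ k, 0 ≤ p k) ∧ ∑ k, p k = 1) (hp' : (∀ k, 0 ≤ p' k) ∧ ∑ k, p' k = 1)
    (σ : S) (L : Ω → ℝ)
    (hL : ∀ᵐ ω ∂(∑ k, ENNReal.ofReal (p k) • Q σ k),
      Tendsto (fun n : ℕ => (1 / (n : ℝ)) * ∑ m ∈ Finset.Icc 1 n, g m ω) atTop
        (nhds (L ω)))
    (hLv : (∫ ω, L ω ∂(∑ k, ENNReal.ofReal (p k) • Q σ k)) = v p) :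
    (∫ ω, liminf (fun n : ℕ => (1 / (n : ℝ)) * ∑ m ∈ Finset.Icc 1 n, g m ω) atTop
        ∂(∑ k, ENNReal.ofReal (p' k) • Q σ k))
      ≥ v p' - 2 * ∑ k, |p k - p' k| :=
  pomdp_junction_lemma_general Q hQ g hg hg01 vN v hvN hv hvNLip p p' hp hp' σ L hL hLv
end
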